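/- Let (A,∘) be a Novikov algebra with a two-sided multiplicative identity e (e∘a = a∘e = a for all a). Then any symmetric bilinear form B on A satisfying B(a∘b,c) = -B(b, a∘c + c∘a) is degenerate; in particular there is no quadratic Novikov algebra structure on (A,∘). -/
import Mathlib


/-- On a (nontrivial) Novikov algebra with a two-sided identity, every
symmetric bilinear form satisfying the invariance B(a∘b,c) = -B(b, a∘c + c∘a) is
degenerate; hence there is no quadratic Novikov algebra structure on it. -/
theorem no_quadratic_structure_on_unital_novikov
    {k A : Type*} [Field k] [CharZero k] [AddCommGroup A] [Module k A] [Nontrivial A]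
    (mul : A →ₗ[k] A →ₗ[k] A)
    (hnov1 : ∀ a b c, mul (mul a b) c - mul a (mul b c) = mul (mul b a) c - mul b (mul a c))
    (hnov2 : ∀ a b c, mul (mul a b) c = mul (mul a c) b)
    (e : A) (he : ∀ a, mul e a = a ∧ mul a e = a) :
    ∀ B : LinearMap.BilinForm k A,
      (∀ a b, B a b = B b a) →
      (∀ a b c, B (mul a b) c = -(B b (mul a c + mul c a))) →
      ¬(∀ a, (∀ b, B a b = 0) → a = 0) := by
  intro B hsym hinv hnd
  have key : ∀ b c, B b c = 0 := by
    intro b c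
    have h := hinv e b c
    rw [(he b).1, (he c).1, (he c).2] at h
    rw [map_add] at h
    have : (3 : k) * B b c = 0 := by linear_combination h
    have h3 : (3 : k) ≠ 0 := by norm_num
    exact (mul_eq_zero.mp this).resolve_left h3
  have he0 : e = 0 := hnd e (key e)
  obtain ⟨a, ha⟩ := exists_ne (0 : A)
  apply ha
  have := (he a).1
  rw [he0] at this
  simpa using this.symm
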